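/- Let Γ = (I,E) be a quiver, K a field, v,w ∈ ℕ^I with char(K) = 0 or char(K) > ∑_i v_i, and λ ∈ K^×. Suppose (A_e, I_i, B_e, J_i) satisfies the moment map equation I_i J_i + ∑_{e: s(e)=i} B_e A_e − ∑_{e: t(e)=i} A_e B_e = λ·Id_{V_i} for all i. If g = (g_i)_{i∈I} with g_i ∈ GL(V_i) fixes this point, i.e. g_{t(e)} A_e g_{s(e)}^{-1} = A_e, g_{s(e)} B_e g_{t(e)}^{-1} = B_e, g_i I_i = I_i, and J_i g_i^{-1} = J_i for all e, i, then g_i = Id_{V_i} for all i. (The group ∏_i GL(V_i) acts freely on the fiber of the moment map over λ·1.) -/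

import Mathlib

open Module

/-- Transport an endomorphism of `V i` to an endomorphism of `V j` along `i = j`. -/
def castEnd {K : Type*} [Field K] {I : Type*} (V : I → Type*)
    [∀ i, AddCommGroup (V i)] [∀ i, Module K (V i)] {i j : I} (h : i = j)
    (f : Module.End K (V i)) : Module.End K (V j) := h ▸ f

section EdgeSum

variable {K : Type*} [Field K] {I E : Type*} [DecidableEq I] [Fintype E]
  (U : I → Type*) [∀ i, AddCommGroup (U i)] [∀ i, Module K (U i)]

/-- `∑_{f(e) = i} φ e`, each summand transported to `U i` along `f e = i`. -/
def edgeSum (f : E → I) (φ : ∀ e, Module.End K (U (f e))) (i : I) : Module.End K (U i) :=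
  ∑ e, if h : f e = i then castEnd U h (φ e) else 0

theorem coe_edgeSum_apply_of_coe_apply {V : I → Type*} [∀ i, AddCommGroup (V i)]
    [∀ i, Module K (V i)] (p : ∀ i, Submodule K (V i)) (f : E → I)
    (φ : ∀ e, Module.End K (V (f e))) (ψ : ∀ e, Module.End K (p (f e)))
    (hψ : ∀ e (u : p (f e)), (ψ e u : V (f e)) = φ e u) (i : I) (u : p i) :
    (edgeSum (fun i => p i) f ψ i u : V i) = edgeSum V f φ i u := by
  simp only [edgeSum, LinearMap.sum_apply, Submodule.coe_sum]
  refine Finset.sum_congr rfl fun e _ => ?_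
  by_cases h : f e = i
  · subst h
    rw [dif_pos rfl, dif_pos rfl]
    exact hψ e u
  · simp [h]

theorem edgeSum_sub_edgeSum_restrict_eq_smul_id {V W : I → Type*} [∀ i, AddCommGroup (V i)]
    [∀ i, Module K (V i)] [∀ i, AddCommGroup (W i)] [∀ i, Module K (W i)] (s t : E → I)
    (A : ∀ e, V (s e) →ₗ[K] V (t e)) (B : ∀ e, V (t e) →ₗ[K] V (s e))
    (II : ∀ i, W i →ₗ[K] V i) (J : ∀ i, V i →ₗ[K] W i) (lam : K)
    (hmom : ∀ i, II i ∘ₗ J i + edgeSum V s (fun e => B e ∘ₗ A e) i -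
      edgeSum V t (fun e => A e ∘ₗ B e) i = lam • LinearMap.id)
    (p : ∀ i, Submodule K (V i)) (hA : ∀ e, ∀ x ∈ p (s e), A e x ∈ p (t e))
    (hB : ∀ e, ∀ x ∈ p (t e), B e x ∈ p (s e)) (hJ : ∀ i, ∀ x ∈ p i, J i x = 0) (i : I) :
    edgeSum (fun i => p i) s (fun e => (B e).restrict (hB e) ∘ₗ (A e).restrict (hA e)) i -
      edgeSum (fun i => p i) t (fun e => (A e).restrict (hA e) ∘ₗ (B e).restrict (hB e)) i =
      lam • LinearMap.id := by
  ext u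
  have hu := congr($(hmom i) (u : V i))
  simp only [LinearMap.sub_apply, LinearMap.add_apply, LinearMap.comp_apply, hJ i u u.2,
    map_zero, zero_add] at hu
  rw [LinearMap.sub_apply, Submodule.coe_sub,
    coe_edgeSum_apply_of_coe_apply p s (fun e => B e ∘ₗ A e) _ fun e u => rfl,
    coe_edgeSum_apply_of_coe_apply p t (fun e => A e ∘ₗ B e) _ fun e u => rfl, hu]
  rfl

variable [Fintype I]

theorem sum_trace_edgeSum (f : E → I) (φ : ∀ e, Module.End K (U (f e))) :
    ∑ i, LinearMap.trace K (U i) (edgeSum U f φ i) = ∑ e, LinearMap.trace K (U (f e)) (φ e) := by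
  simp only [edgeSum, map_sum, apply_dite (LinearMap.trace K _), map_zero]
  rw [Finset.sum_comm]
  exact Finset.sum_congr rfl fun e _ => Fintype.sum_dite_eq (f e) _

theorem sum_trace_edgeSum_sub_edgeSum [∀ i, FiniteDimensional K (U i)] (s t : E → I)
    (A : ∀ e, U (s e) →ₗ[K] U (t e)) (B : ∀ e, U (t e) →ₗ[K] U (s e)) :
    ∑ i, LinearMap.trace K (U i)
      (edgeSum U s (fun e => B e ∘ₗ A e) i - edgeSum U t (fun e => A e ∘ₗ B e) i) = 0 := by
  simp only [map_sub, Finset.sum_sub_distrib, sum_trace_edgeSum, sub_eq_zero]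
  exact Finset.sum_congr rfl fun e _ => LinearMap.trace_comp_comm' (A e) (B e)

theorem mul_sum_finrank_eq_zero_of_edgeSum_sub_edgeSum_eq_smul_id
    [∀ i, FiniteDimensional K (U i)] (s t : E → I)
    (A : ∀ e, U (s e) →ₗ[K] U (t e)) (B : ∀ e, U (t e) →ₗ[K] U (s e)) (lam : K)
    (h : ∀ i, edgeSum U s (fun e => B e ∘ₗ A e) i - edgeSum U t (fun e => A e ∘ₗ B e) i =
      lam • LinearMap.id) :
    lam * ((∑ i, finrank K (U i) : ℕ) : K) = 0 := by
  rw [← sum_trace_edgeSum_sub_edgeSum U s t A B, Nat.cast_sum, Finset.mul_sum]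
  simp [h]

end EdgeSum

theorem Nat.eq_zero_of_cast_eq_zero_of_lt_ringChar {R : Type*} [NonAssocSemiring R] {n : ℕ}
    (hchar : ringChar R = 0 ∨ n < ringChar R) (hn : (n : R) = 0) : n = 0 := by
  rcases hchar with h | h
  · simpa [h] using ringChar.dvd hn
  · exact Nat.eq_zero_of_dvd_of_lt (ringChar.dvd hn) h

namespace LinearMap

variable {K M N : Type*} [Field K] [AddCommGroup M] [Module K M] [AddCommGroup N] [Module K N]

theorem map_mem_range_sub_id {f : M →ₗ[K] N} {g : M →ₗ[K] M} {h : N →ₗ[K] N}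
    (hfg : f ∘ₗ g = h ∘ₗ f) {x : M} (hx : x ∈ range (g - id)) : f x ∈ range (h - id) := by
  obtain ⟨y, rfl⟩ := hx
  exact ⟨f y, by simpa using congr($hfg y).symm⟩

theorem map_eq_zero_of_mem_range_sub_id {f : M →ₗ[K] N} {g : M →ₗ[K] M} (hfg : f ∘ₗ g = f)
    {x : M} (hx : x ∈ range (g - id)) : f x = 0 := by
  obtain ⟨y, rfl⟩ := hx
  simpa [sub_eq_zero] using congr($hfg y)

end LinearMap

theorem LinearEquiv.eq_refl_of_range_sub_id_eq_bot {K M : Type*} [Field K] [AddCommGroup M]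
    [Module K M] {g : M ≃ₗ[K] M} (h : LinearMap.range (g.toLinearMap - LinearMap.id) = ⊥) :
    g = LinearEquiv.refl K M := by
  rw [LinearMap.range_eq_bot, sub_eq_zero] at h
  exact LinearEquiv.toLinearMap_injective h

theorem quiver_moment_map_free_action_general
    (K : Type*) [Field K]
    (I : Type*) [Fintype I] [DecidableEq I]
    (E : Type*) [Fintype E] (s t : E → I)
    (V : I → Type*) [∀ i, AddCommGroup (V i)] [∀ i, Module K (V i)]
    [∀ i, FiniteDimensional K (V i)]
    (W : I → Type*) [∀ i, AddCommGroup (W i)] [∀ i, Module K (W i)]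
    (hchar : ringChar K = 0 ∨ (∑ i, Module.finrank K (V i)) < ringChar K)
    (lam : K) (hlam : lam ≠ 0)
    (A : ∀ e : E, V (s e) →ₗ[K] V (t e)) (B : ∀ e : E, V (t e) →ₗ[K] V (s e))
    (II : ∀ i : I, W i →ₗ[K] V i) (J : ∀ i : I, V i →ₗ[K] W i)
    (hmom : ∀ i : I,
      (II i ∘ₗ J i) + (∑ e : E, if h : s e = i then castEnd V h (B e ∘ₗ A e) else 0) -
          (∑ e : E, if h : t e = i then castEnd V h (A e ∘ₗ B e) else 0) =
        lam • (LinearMap.id : Module.End K (V i)))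
    (g : ∀ i : I, V i ≃ₗ[K] V i)
    (hA : ∀ e : E, (g (t e)).toLinearMap ∘ₗ A e ∘ₗ (g (s e)).symm.toLinearMap = A e)
    (hB : ∀ e : E, (g (s e)).toLinearMap ∘ₗ B e ∘ₗ (g (t e)).symm.toLinearMap = B e)
    (hJ : ∀ i : I, J i ∘ₗ (g i).symm.toLinearMap = J i) :
    ∀ i : I, g i = LinearEquiv.refl K (V i) := by
  let U i := LinearMap.range ((g i).toLinearMap - LinearMap.id)
  have hAU e : ∀ x ∈ U (s e), A e x ∈ U (t e) := fun _ =>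
    LinearMap.map_mem_range_sub_id (((g (s e)).comp_toLinearMap_symm_eq _ _).mp (hA e)).symm
  have hBU e : ∀ x ∈ U (t e), B e x ∈ U (s e) := fun _ =>
    LinearMap.map_mem_range_sub_id (((g (t e)).comp_toLinearMap_symm_eq _ _).mp (hB e)).symm
  have hJU i : ∀ x ∈ U i, J i x = 0 := fun _ =>
    LinearMap.map_eq_zero_of_mem_range_sub_id (((g i).comp_toLinearMap_symm_eq _ _).mp (hJ i)).symm
  have htrace := mul_sum_finrank_eq_zero_of_edgeSum_sub_edgeSum_eq_smul_id (fun i => U i) s t _ _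
    lam (edgeSum_sub_edgeSum_restrict_eq_smul_id s t A B II J lam hmom U hAU hBU hJU)
  have hdim : ∑ i, finrank K (U i) = 0 := by
    refine Nat.eq_zero_of_cast_eq_zero_of_lt_ringChar (hchar.imp_right fun h => ?_)
      ((mul_eq_zero.mp htrace).resolve_left hlam)
    exact (Finset.sum_le_sum fun i _ => Submodule.finrank_le (U i)).trans_lt h
  exact fun i => LinearEquiv.eq_refl_of_range_sub_id_eq_bot
    (Submodule.finrank_eq_zero.mp (Finset.sum_eq_zero_iff.mp hdim i (Finset.mem_univ i)))

/-- Freeness of the `∏ᵢ GL(Vᵢ)` action at a solution of the deformed quiver moment map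
equation: if `(A,I,B,J)` satisfies
`I_i J_i + ∑_{s(e)=i} B_e A_e − ∑_{t(e)=i} A_e B_e = λ·Id` with `λ ≠ 0` and
`char K = 0` or `char K > ∑ᵢ vᵢ`, and `g = (gᵢ)` fixes the point
(`g_{t(e)} A_e g_{s(e)}⁻¹ = A_e`, `g_{s(e)} B_e g_{t(e)}⁻¹ = B_e`, `gᵢ Iᵢ = Iᵢ`,
`Jᵢ gᵢ⁻¹ = Jᵢ`), then `gᵢ = Id` for all `i`. -/
theorem quiver_moment_map_free_action
    (K : Type*) [Field K]
    (I : Type*) [Fintype I] [DecidableEq I]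
    (E : Type*) [Fintype E] (s t : E → I)
    (V : I → Type*) [∀ i, AddCommGroup (V i)] [∀ i, Module K (V i)]
    [∀ i, FiniteDimensional K (V i)]
    (W : I → Type*) [∀ i, AddCommGroup (W i)] [∀ i, Module K (W i)]
    [∀ i, FiniteDimensional K (W i)]
    (hchar : ringChar K = 0 ∨ (∑ i, Module.finrank K (V i)) < ringChar K)
    (lam : K) (hlam : lam ≠ 0)
    (A : ∀ e : E, V (s e) →ₗ[K] V (t e)) (B : ∀ e : E, V (t e) →ₗ[K] V (s e))
    (II : ∀ i : I, W i →ₗ[K] V i) (J : ∀ i : I, V i →ₗ[K] W i)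
    (hmom : ∀ i : I,
      (II i ∘ₗ J i) + (∑ e : E, if h : s e = i then castEnd V h (B e ∘ₗ A e) else 0) -
          (∑ e : E, if h : t e = i then castEnd V h (A e ∘ₗ B e) else 0) =
        lam • (LinearMap.id : Module.End K (V i)))
    (g : ∀ i : I, V i ≃ₗ[K] V i)
    (hA : ∀ e : E, (g (t e)).toLinearMap ∘ₗ A e ∘ₗ (g (s e)).symm.toLinearMap = A e)
    (hB : ∀ e : E, (g (s e)).toLinearMap ∘ₗ B e ∘ₗ (g (t e)).symm.toLinearMap = B e)
    (hI : ∀ i : I, (g i).toLinearMap ∘ₗ II i = II i)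
    (hJ : ∀ i : I, J i ∘ₗ (g i).symm.toLinearMap = J i) :
    ∀ i : I, g i = LinearEquiv.refl K (V i) :=
  quiver_moment_map_free_action_general K I E s t V W hchar lam hlam A B II J hmom g hA hB hJ
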